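/- Let λ > 0, let m ≥ 0 be an integer, and for |j| ≤ m define the discretized plane-wave combination b_j^m(x) := (1/((2m+1) i^j)) Σ_{l=−m}^{m} e^{ijφ_l} e^{i k_l · x}, where φ_l := 2πl/(2m+1) and k_l := λ(cos φ_l, sin φ_l). Then for every x ∈ ℝ², b_j^m(x) = Σ_{p ∈ ℤ} i^{p(2m+1)} b_{λ, j+p(2m+1)}(x), the series being absolutely convergent. -/

import Mathlib

/-!
Each plane wave is expanded by the Jacobi–Anger formula `e^{iρ cos α} = Σₙ iⁿ e^{inα} Jₙ(ρ)`, the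
Bessel generating function `exp (x/2 (t - t⁻¹)) = Σₙ Jₙ(x) tⁿ` at `t = i e^{iα}`; the generating
function itself is the Cauchy product of the exponential series of `x t / 2` and `-x t⁻¹ / 2`,
regrouped by the power of `t`. Averaging over the `2m+1` equispaced directions `φ_l`, the root of
unity sum `Σ_l e^{i(j-n)φ_l}` vanishes unless `n ≡ j (mod 2m+1)`, which leaves exactly the modes
`n = j + p(2m+1)`. The same double series, taken in absolute value, shows `Σₙ |Jₙ(x)| < ∞`.
-/

open MeasureTheory Metric

/-- Bessel function of the first kind of nonnegative integer order. -/
noncomputable def besselJnat (n : ℕ) (x : ℝ) : ℝ :=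
  ∑' k : ℕ, ((-1 : ℝ) ^ k / ((Nat.factorial k : ℝ) * (Nat.factorial (n + k) : ℝ))) *
    (x / 2) ^ (n + 2 * k)

/-- Bessel function of the first kind of integer order, with `J_{-n} = (-1)^n J_n`. -/
noncomputable def besselJ (n : ℤ) (x : ℝ) : ℝ :=
  if 0 ≤ n then besselJnat n.toNat x else (-1 : ℝ) ^ n.natAbs * besselJnat n.natAbs x

/-- The Fourier-Bessel function `b_{λ,j}(x) = e^{ijθ} J_j(λ r)` on `ℝ² ≃ ℂ`. -/
noncomputable def fourierBessel (lam : ℝ) (j : ℤ) (z : ℂ) : ℂ :=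
  Complex.exp (Complex.I * j * z.arg) * besselJ j (lam * ‖z‖)

/-- Normalized uniform measure `dx/π` on the closed unit disk. -/
noncomputable def unifDisk : Measure ℂ :=
  (ENNReal.ofReal Real.pi)⁻¹ • (volume.restrict (closedBall (0 : ℂ) 1))

/-- Normalized arc-length measure `dσ/(2π)` on the unit circle. -/
noncomputable def circleUnif : Measure ℂ :=
  (ENNReal.ofReal (2 * Real.pi))⁻¹ •
    Measure.map (fun θ : ℝ => Complex.exp (θ * Complex.I))
      (volume.restrict (Set.Ioc (0 : ℝ) (2 * Real.pi)))

/-- The mixed measure `ν_α = (1-α) dx/π + α dσ/(2π)`. -/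
noncomputable def nuAlpha (a : ℝ) : Measure ℂ :=
  ENNReal.ofReal (1 - a) • unifDisk + ENNReal.ofReal a • circleUnif

/-- Squared `L²(ν)` norm of a function. -/
noncomputable def l2normSq (ν : Measure ℂ) (f : ℂ → ℂ) : ℝ :=
  ∫ z, ‖f z‖ ^ 2 ∂ν

/-- A measure on `ℂ` invariant under every rotation about the origin. -/
def RotationInvariant (ν : Measure ℂ) : Prop :=
  ∀ θ : ℝ, Measure.map (fun z : ℂ => Complex.exp (θ * Complex.I) * z) ν = ν

/-- Plane wave `e^{i k·x}` with wave vector `k = λ(cos φ, sin φ)`. -/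
noncomputable def planeWaveFn (lam phi : ℝ) (z : ℂ) : ℂ :=
  Complex.exp (Complex.I * ((lam * (Real.cos phi * z.re + Real.sin phi * z.im) : ℝ) : ℂ))

/-- Angle `φ_l = 2πl/(2m+1)`. -/
noncomputable def phiAngle (m : ℕ) (l : ℤ) : ℝ := 2 * Real.pi * l / (2 * m + 1)

/-- Discretized plane-wave combination
`b_j^m = (1/((2m+1) i^j)) Σ_{l=-m}^m e^{ijφ_l} e_{k_l}`. -/
noncomputable def pwave (lam : ℝ) (m : ℕ) (j : ℤ) (z : ℂ) : ℂ :=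
  (1 / (((2 * m + 1 : ℕ) : ℂ) * Complex.I ^ j)) *
    ∑ l ∈ Finset.Icc (-(m : ℤ)) (m : ℤ),
      Complex.exp (Complex.I * j * ((phiAngle m l : ℝ) : ℂ)) * planeWaveFn lam (phiAngle m l) z

/-- The quantity `K(V_m^b, ν)` for the Fourier-Bessel space on the unit disk. -/
noncomputable def Kb (lam : ℝ) (ν : Measure ℂ) (m : ℕ) : ℝ :=
  ⨆ z : closedBall (0 : ℂ) 1,
    ∑ j ∈ Finset.Icc (-(m : ℤ)) (m : ℤ),
      ‖fourierBessel lam j ↑z‖ ^ 2 / l2normSq ν (fourierBessel lam j)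

/-- The quantity `K(V_m^e, ν)` for the plane-wave space on the unit disk. -/
noncomputable def Ke (lam : ℝ) (ν : Measure ℂ) (m : ℕ) : ℝ :=
  ⨆ z : closedBall (0 : ℂ) 1,
    ∑ j ∈ Finset.Icc (-(m : ℤ)) (m : ℤ),
      ‖pwave lam m j ↑z‖ ^ 2 / l2normSq ν (pwave lam m j)

/-- Laplacian of a function on `ℝ² ≃ ℂ`. -/
noncomputable def laplacian2 (u : ℂ → ℂ) (z : ℂ) : ℂ :=
  fderiv ℝ (fun w => fderiv ℝ u w 1) z 1 + fderiv ℝ (fun w => fderiv ℝ u w Complex.I) z Complex.I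

open Complex Finset
open scoped Nat Real

/-- The sign `(-1) ^ (-n).toNat` builds the convention `J_{-n} = (-1)^n J_n` into the term. -/
noncomputable def besselTerm (n : ℤ) (k : ℕ) (x : ℝ) : ℝ :=
  (-1) ^ ((-n).toNat + k) * (x / 2) ^ (n.natAbs + 2 * k) / (k ! * (n.natAbs + k)!)

theorem hasSum_besselJnat (n : ℕ) (x : ℝ) :
    HasSum (fun k : ℕ => (-1) ^ k / (k ! * (n + k)! : ℝ) * (x / 2) ^ (n + 2 * k))
      (besselJnat n x) := by
  refine Summable.hasSum <| Summable.of_norm_bounded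
    ((NormedSpace.expSeries_div_summable (|x / 2| ^ 2)).mul_left (|x / 2| ^ n)) fun k => ?_
  have hfact : (1 : ℝ) ≤ (n + k)! := mod_cast Nat.one_le_iff_ne_zero.mpr (Nat.factorial_ne_zero _)
  calc ‖(-1) ^ k / (k ! * (n + k)! : ℝ) * (x / 2) ^ (n + 2 * k)‖
      = |x / 2| ^ n * (|x / 2| ^ 2) ^ k / (k ! * (n + k)!) := by
        rw [norm_mul, norm_div, norm_pow, norm_neg, norm_one, one_pow, norm_pow,
          Real.norm_eq_abs, Real.norm_eq_abs, abs_of_pos (by positivity), pow_add, pow_mul]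
        ring
    _ ≤ |x / 2| ^ n * ((|x / 2| ^ 2) ^ k / k !) := by
        rw [mul_div_assoc]
        gcongr
        exact le_mul_of_one_le_right (by positivity) hfact

theorem hasSum_besselTerm (n : ℤ) (x : ℝ) :
    HasSum (fun k : ℕ => besselTerm n k x) (besselJ n x) := by
  rcases le_or_gt 0 n with hn | hn
  · have hneg : (-n).toNat = 0 := by omega
    have habs : n.natAbs = n.toNat := by omega
    rw [besselJ, if_pos hn]
    refine (hasSum_besselJnat n.toNat x).congr_fun fun k => ?_
    rw [besselTerm, hneg, habs, zero_add]
    ring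
  · have hneg : (-n).toNat = n.natAbs := by omega
    rw [besselJ, if_neg hn.not_ge]
    refine ((hasSum_besselJnat n.natAbs x).mul_left ((-1) ^ n.natAbs)).congr_fun fun k => ?_
    rw [besselTerm, hneg, pow_add]
    ring

/-- `(n, k) ↦ (n⁺ + k, n⁻ + k)`: the exponents of `t` and `t⁻¹` producing `t ^ n` in a term of
`exp (x t / 2) * exp (-x t⁻¹ / 2)`. -/
def intProdNatEquiv : ℤ × ℕ ≃ ℕ × ℕ where
  toFun q := (q.1.toNat + q.2, (-q.1).toNat + q.2)
  invFun p := (p.1 - p.2, min p.1 p.2)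
  left_inv q := by ext <;> simp only <;> omega
  right_inv p := by ext <;> simp only <;> omega

theorem expSeries_mul_expSeries_intProdNatEquiv (x : ℝ) {t : ℂ} (ht : t ≠ 0) (q : ℤ × ℕ) :
    (x / 2 * t) ^ (intProdNatEquiv q).1 / (intProdNatEquiv q).1 ! *
        ((-(x / 2) * t⁻¹) ^ (intProdNatEquiv q).2 / (intProdNatEquiv q).2 !) =
      besselTerm q.1 q.2 x * t ^ q.1 := by
  obtain ⟨n, k⟩ := q
  simp only [intProdNatEquiv, Equiv.coe_fn_mk]
  have ht_pow : t ^ (n.toNat + k) * t⁻¹ ^ ((-n).toNat + k) = t ^ n := by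
    rw [inv_pow, ← zpow_natCast, ← zpow_natCast, ← zpow_neg, ← zpow_add₀ ht]
    congr 1
    omega
  have hx_pow : (x / 2 : ℂ) ^ (n.toNat + k) * (-(x / 2)) ^ ((-n).toNat + k) =
      (-1) ^ ((-n).toNat + k) * (x / 2) ^ (n.natAbs + 2 * k) := by
    rw [neg_pow, show n.natAbs + 2 * k = (n.toNat + k) + ((-n).toNat + k) by omega, pow_add]
    ring
  have hfact : ((n.toNat + k)! * ((-n).toNat + k)! : ℂ) = k ! * (n.natAbs + k)! := by
    rcases le_or_gt 0 n with hn | hn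
    · rw [show (-n).toNat = 0 by omega, show n.natAbs = n.toNat by omega, zero_add, mul_comm]
    · rw [show n.toNat = 0 by omega, show (-n).toNat = n.natAbs by omega, zero_add]
  rw [mul_pow, mul_pow, div_mul_div_comm, mul_mul_mul_comm, ht_pow, hx_pow, hfact, besselTerm]
  push_cast
  ring

theorem hasSum_besselTerm_mul_zpow (x : ℝ) {t : ℂ} (ht : t ≠ 0) :
    HasSum (fun q : ℤ × ℕ => (besselTerm q.1 q.2 x : ℂ) * t ^ q.1)
      (exp (x / 2 * t - x / 2 * t⁻¹)) := by
  have hsummable := summable_mul_of_summable_norm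
    (NormedSpace.norm_expSeries_div_summable (x / 2 * t : ℂ))
    (NormedSpace.norm_expSeries_div_summable (-(x / 2) * t⁻¹ : ℂ))
  have hprod := (NormedSpace.expSeries_div_hasSum_exp (x / 2 * t : ℂ)).mul
    (NormedSpace.expSeries_div_hasSum_exp (-(x / 2) * t⁻¹ : ℂ)) hsummable
  rw [← intProdNatEquiv.hasSum_iff] at hprod
  rw [sub_eq_add_neg, ← neg_mul, exp_add, exp_eq_exp_ℂ]
  exact hprod.congr_fun fun q => (expSeries_mul_expSeries_intProdNatEquiv x ht q).symm

theorem summable_abs_besselTerm (x : ℝ) :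
    Summable fun q : ℤ × ℕ => |besselTerm q.1 q.2 x| := by
  have hprod := summable_mul_of_summable_norm (NormedSpace.norm_expSeries_div_summable (x / 2 : ℂ))
    (NormedSpace.norm_expSeries_div_summable (-(x / 2) : ℂ))
  rw [← intProdNatEquiv.summable_iff] at hprod
  refine hprod.norm.congr fun q => ?_
  simpa using congrArg norm (expSeries_mul_expSeries_intProdNatEquiv x one_ne_zero q)

theorem hasSum_besselJ_mul_zpow (x : ℝ) {t : ℂ} (ht : t ≠ 0) :
    HasSum (fun n : ℤ => (besselJ n x : ℂ) * t ^ n) (exp (x / 2 * t - x / 2 * t⁻¹)) := by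
  refine (hasSum_besselTerm_mul_zpow x ht).prod_fiberwise fun n => ?_
  have hn : HasSum (fun k : ℕ => (besselTerm n k x : ℂ)) (besselJ n x) :=
    hasSum_ofReal.mpr (hasSum_besselTerm n x)
  exact hn.mul_right (t ^ n)

theorem summable_abs_besselJ (x : ℝ) : Summable fun n : ℤ => |besselJ n x| := by
  have hnonneg : 0 ≤ fun q : ℤ × ℕ => |besselTerm q.1 q.2 x| := fun q => abs_nonneg _
  obtain ⟨hfiber, hmarginal⟩ := (summable_prod_of_nonneg hnonneg).mp (summable_abs_besselTerm x)
  refine hmarginal.of_nonneg_of_le (fun n => abs_nonneg _) fun n => ?_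
  rw [← (hasSum_besselTerm n x).tsum_eq]
  exact norm_tsum_le_tsum_norm (f := fun k => besselTerm n k x) (hfiber n)

theorem sum_Icc_zpow_of_pow_eq_one {K : Type*} [Field K] [DecidableEq K] {w : K} {m : ℕ}
    (hw : w ^ (2 * m + 1) = 1) :
    ∑ l ∈ Icc (-(m : ℤ)) m, w ^ l = if w = 1 then ((2 * m + 1 : ℕ) : K) else 0 := by
  split_ifs with h1
  · simp only [h1, one_zpow, sum_const, Int.card_Icc, nsmul_eq_mul, mul_one]
    congr 1
    omega
  have hw0 : w ≠ 0 := by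
    rintro rfl
    simp at hw
  have hIcc : Icc (-(m : ℤ)) m = (range (2 * m + 1)).image fun k : ℕ => (k : ℤ) - m := by
    ext l
    simp only [mem_Icc, mem_image, mem_range]
    constructor
    · intro hl
      exact ⟨(l + m).toNat, by omega, by omega⟩
    · rintro ⟨k, hk, rfl⟩
      omega
  rw [hIcc, sum_image fun a _ b _ h => by simpa using h]
  simp only [zpow_sub₀ hw0, zpow_natCast, ← sum_div, geom_sum_eq h1, hw, sub_self, zero_div]

theorem sum_exp_I_mul_phiAngle (m : ℕ) (d : ℤ) :
    ∑ l ∈ Icc (-(m : ℤ)) m, exp (I * d * phiAngle m l) =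
      if (2 * m + 1 : ℤ) ∣ d then ((2 * m + 1 : ℕ) : ℂ) else 0 := by
  have hζ := isPrimitiveRoot_exp (2 * m + 1) (by omega)
  have hterm : ∀ l : ℤ,
      exp (I * d * phiAngle m l) = (exp (2 * π * I / (2 * m + 1 : ℕ)) ^ d) ^ l := by
    intro l
    rw [← zpow_mul, ← exp_int_mul, phiAngle]
    push_cast
    ring_nf
  have hpow : (exp (2 * π * I / (2 * m + 1 : ℕ)) ^ d) ^ (2 * m + 1) = 1 := by
    rw [← zpow_natCast, ← zpow_mul, mul_comm d, zpow_mul, zpow_natCast, hζ.pow_eq_one, one_zpow]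
  rw [sum_congr rfl fun l _ => hterm l, sum_Icc_zpow_of_pow_eq_one hpow]
  simp only [hζ.zpow_eq_one_iff_dvd]
  push_cast
  rfl

theorem hasSum_jacobiAnger (ρ α : ℝ) :
    HasSum (fun n : ℤ => I ^ n * exp (I * n * α) * besselJ n ρ) (exp (I * (ρ * Real.cos α))) := by
  have ht : I * exp (α * I) ≠ 0 := mul_ne_zero I_ne_zero (exp_ne_zero _)
  have hexponent : (ρ / 2 : ℂ) * (I * exp (α * I)) - ρ / 2 * (I * exp (α * I))⁻¹ =
      I * (ρ * Real.cos α) := by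
    rw [mul_inv, inv_I, ← exp_neg, ← neg_mul]
    push_cast
    linear_combination -(I * ρ / 2) * two_cos α
  rw [← hexponent]
  refine (hasSum_besselJ_mul_zpow ρ ht).congr_fun fun n => ?_
  rw [mul_zpow, ← exp_int_mul]
  ring_nf

theorem planeWaveFn_eq (lam phi : ℝ) (z : ℂ) :
    planeWaveFn lam phi z = exp (I * ((lam * ‖z‖ : ℝ) * Real.cos (arg z - phi))) := by
  rw [planeWaveFn, Real.cos_sub, ← norm_mul_cos_arg z, ← norm_mul_sin_arg z]
  push_cast
  ring_nf

theorem hasSum_planeWaveFn (lam phi : ℝ) (z : ℂ) :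
    HasSum (fun n : ℤ => I ^ n * exp (-(I * n * phi)) * fourierBessel lam n z)
      (planeWaveFn lam phi z) := by
  rw [planeWaveFn_eq]
  refine (hasSum_jacobiAnger (lam * ‖z‖) (arg z - phi)).congr_fun fun n => ?_
  rw [fourierBessel, ofReal_sub, mul_sub, sub_eq_add_neg, exp_add]
  ring

theorem norm_fourierBessel (lam : ℝ) (n : ℤ) (z : ℂ) :
    ‖fourierBessel lam n z‖ = |besselJ n (lam * ‖z‖)| := by
  have hphase : I * n * arg z = ((n * arg z : ℝ) : ℂ) * I := by push_cast; ring
  rw [fourierBessel, norm_mul, norm_real, Real.norm_eq_abs, hphase, norm_exp_ofReal_mul_I, one_mul]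

theorem hasSum_pwave (lam : ℝ) (m : ℕ) (j : ℤ) (z : ℂ) :
    HasSum (fun n : ℤ =>
        if (2 * m + 1 : ℤ) ∣ j - n then I ^ (n - j) * fourierBessel lam n z else 0)
      (pwave lam m j z) := by
  have h := (hasSum_sum (s := Icc (-(m : ℤ)) m) fun l _ =>
    (hasSum_planeWaveFn lam (phiAngle m l) z).mul_left (exp (I * j * phiAngle m l))).mul_left
      (1 / (((2 * m + 1 : ℕ) : ℂ) * I ^ j))
  refine h.congr_fun fun n => ?_
  have hterm : ∀ l : ℤ, exp (I * j * phiAngle m l) *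
      (I ^ n * exp (-(I * n * phiAngle m l)) * fourierBessel lam n z) =
      I ^ n * fourierBessel lam n z * exp (I * (j - n : ℤ) * phiAngle m l) := by
    intro l
    rw [show I * (j - n : ℤ) * phiAngle m l = I * j * phiAngle m l + -(I * n * phiAngle m l) by
      push_cast; ring, exp_add]
    ring
  rw [sum_congr rfl fun l _ => hterm l, ← mul_sum, sum_exp_I_mul_phiAngle]
  split_ifs
  · have hN : ((2 * m + 1 : ℕ) : ℂ) ≠ 0 := Nat.cast_ne_zero.mpr (by omega)
    rw [zpow_sub₀ I_ne_zero]
    field_simp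
  · simp

theorem injective_add_mul_two_mul_add_one (j : ℤ) (m : ℕ) :
    Function.Injective fun p : ℤ => j + p * (2 * m + 1) := fun p q h => by
  simpa [show (2 * m + 1 : ℤ) ≠ 0 by omega] using h

theorem hasSum_pwave_aliasing (lam : ℝ) (m : ℕ) (j : ℤ) (z : ℂ) :
    HasSum (fun p : ℤ => I ^ (p * (2 * m + 1 : ℤ)) * fourierBessel lam (j + p * (2 * m + 1)) z)
      (pwave lam m j z) := by
  have hsupport : ∀ n ∉ Set.range fun p : ℤ => j + p * (2 * m + 1),
      (if (2 * m + 1 : ℤ) ∣ j - n then I ^ (n - j) * fourierBessel lam n z else 0) = 0 := by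
    intro n hn
    refine if_neg fun ⟨q, hq⟩ => hn ⟨-q, ?_⟩
    linear_combination hq
  refine ((injective_add_mul_two_mul_add_one j m).hasSum_iff hsupport).mpr
    (hasSum_pwave lam m j z) |>.congr_fun fun p => ?_
  rw [Function.comp_apply, if_pos ⟨-p, by ring⟩, add_sub_cancel_left]

theorem stmt_11_general (lam : ℝ) (m : ℕ) (j : ℤ) :
    ∀ z : ℂ,
      Summable (fun p : ℤ =>
        ‖Complex.I ^ (p * (2 * (m : ℤ) + 1)) *
          fourierBessel lam (j + p * (2 * (m : ℤ) + 1)) z‖) ∧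
      pwave lam m j z =
        ∑' p : ℤ, Complex.I ^ (p * (2 * (m : ℤ) + 1)) *
          fourierBessel lam (j + p * (2 * (m : ℤ) + 1)) z := by
  intro z
  refine ⟨?_, (hasSum_pwave_aliasing lam m j z).tsum_eq.symm⟩
  simp only [norm_mul, norm_zpow, norm_I, one_zpow, one_mul, norm_fourierBessel]
  exact (summable_abs_besselJ _).comp_injective (injective_add_mul_two_mul_add_one j m)

/-- Aliasing identity: for `|j| ≤ m` and every `x ∈ ℝ²`,
`b_j^m(x) = Σ_{p ∈ ℤ} i^{p(2m+1)} b_{λ, j+p(2m+1)}(x)`, the series converging absolutely. -/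
theorem stmt_11 (lam : ℝ) (hlam : 0 < lam) (m : ℕ) (j : ℤ) (hj : |j| ≤ (m : ℤ)) :
    ∀ z : ℂ,
      Summable (fun p : ℤ =>
        ‖Complex.I ^ (p * (2 * (m : ℤ) + 1)) *
          fourierBessel lam (j + p * (2 * (m : ℤ) + 1)) z‖) ∧
      pwave lam m j z =
        ∑' p : ℤ, Complex.I ^ (p * (2 * (m : ℤ) + 1)) *
          fourierBessel lam (j + p * (2 * (m : ℤ) + 1)) z :=
  stmt_11_general lam m j
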